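/- Let R be a commutative ring and I, J, S ideals of R with J ⊆ I. Suppose I = (λ) is principal and S : (λ) = S (i.e., λ is a nonzerodivisor modulo S). Then (J + S) : (I + S) = (J : I) + S. -/
import Mathlib


/-- Let `R` be a commutative ring and `I, J, S` ideals with `J ⊆ I`, `I = (λ)`
principal, and `S : (λ) = S` (i.e. `λ` is a nonzerodivisor modulo `S`). Then
`(J + S) : (I + S) = (J : I) + S`. -/
theorem stmt_6 {R : Type*} [CommRing R] (I J S : Ideal R) (lam : R)
    (hJI : J ≤ I) (hI : I = Ideal.span {lam})
    (hS : S.colon (Ideal.span {lam}) = S) :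
    (J + S).colon (I + S) = J.colon I + S := by
  apply le_antisymm
  · intro r hr
    have hlam : lam ∈ I + S := by
      exact Submodule.mem_sup_left (hI ▸ Ideal.subset_span rfl)
    have hrl : r * lam ∈ J + S := Submodule.mem_colon.mp hr lam hlam
    obtain ⟨j, hj, s, hs, hj_eq⟩ := Submodule.mem_sup.mp hrl
    have hjI : j ∈ Ideal.span {lam} := hI ▸ hJI hj
    obtain ⟨a, ha⟩ := Ideal.mem_span_singleton'.mp hjI
    have hrs : r - a ∈ S := by
      rw [← hS]
      rw [Submodule.mem_colon]
      intro p hp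
      obtain ⟨c, hc⟩ := Ideal.mem_span_singleton'.mp hp
      have : (r - a) * lam = s := by
        rw [sub_mul, ha, ← hj_eq]; ring
      rw [smul_eq_mul, ← hc, mul_comm c lam, ← mul_assoc, this]
      exact S.mul_mem_right c hs
    have haJ : a ∈ J.colon I := by
      rw [Submodule.mem_colon]
      intro p hp
      rw [hI] at hp
      obtain ⟨c, hc⟩ := Ideal.mem_span_singleton'.mp hp
      rw [smul_eq_mul, ← hc, mul_comm c lam, ← mul_assoc, ha]
      exact J.mul_mem_right c hj
    have : r = a + (r - a) := by ring
    rw [this]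
    exact Submodule.add_mem_sup haJ hrs
  · intro r hr
    obtain ⟨a, ha, s, hs, rfl⟩ := Submodule.mem_sup.mp hr
    rw [Submodule.mem_colon]
    intro p hp
    obtain ⟨x, hx, t, ht, rfl⟩ := Submodule.mem_sup.mp hp
    have h1 : a * x ∈ J := Submodule.mem_colon.mp ha x hx
    have : (a + s) • (x + t) = a * x + (a * t + s * (x + t)) := by
      simp [smul_eq_mul]; ring
    rw [this]
    exact Submodule.add_mem_sup h1 (S.add_mem (S.mul_mem_left a ht) (S.mul_mem_right (x + t) hs))
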